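/- For every n ≥ 1, the Lie algebra sol_{A_n} = {X ∈ M_n(ℂ) | Xᵀ A_n + A_n X = 0}, viewed as a Lie subalgebra of the matrix Lie algebra gl_n(ℂ) with bracket [X,Y] = XY − YX, is solvable. -/

import Mathlib

open Matrix

attribute [local instance 100] LieRing.ofAssociativeRing

/-- The `n × n` nilpotent upper-shift matrix `A_n`. -/
def shiftMat (n : ℕ) : Matrix (Fin n) (Fin n) ℂ :=
  Matrix.of fun i j => if (j : ℕ) = (i : ℕ) + 1 then 1 else 0

/-- The Lie algebra `sol_A = {X | Xᵀ A + A X = 0}`, viewed as a Lie subalgebra of the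
matrix Lie algebra `gl_n(ℂ)` with bracket `[X, Y] = XY - YX`. -/
def solAlg (n : ℕ) (A : Matrix (Fin n) (Fin n) ℂ) :
    LieSubalgebra ℂ (Matrix (Fin n) (Fin n) ℂ) where
  carrier := {X | Xᵀ * A + A * X = 0}
  add_mem' := by
    intro a b ha hb
    simp only [Set.mem_setOf_eq] at ha hb ⊢
    have key : (a + b)ᵀ * A + A * (a + b) = (aᵀ * A + A * a) + (bᵀ * A + A * b) := by
      rw [Matrix.transpose_add]; noncomm_ring
    rw [key, ha, hb, add_zero]
  zero_mem' := by simp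
  smul_mem' := by
    intro c x hx
    simp only [Set.mem_setOf_eq] at hx ⊢
    rw [Matrix.transpose_smul, Matrix.smul_mul, Matrix.mul_smul, ← smul_add, hx, smul_zero]
  lie_mem' := by
    intro x y hx hy
    simp only [Set.mem_setOf_eq] at hx hy ⊢
    rw [Ring.lie_def]
    have key : (x * y - y * x)ᵀ * A + A * (x * y - y * x) =
        yᵀ * (xᵀ * A + A * x) + (xᵀ * A + A * x) * y -
          xᵀ * (yᵀ * A + A * y) - (yᵀ * A + A * y) * x := by
      rw [Matrix.transpose_sub, Matrix.transpose_mul, Matrix.transpose_mul]; noncomm_ring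
    rw [key, hx, hy]
    simp

/-!
For `X ∈ sol_{A_n}` with first row `a`, the relation `Xᵀ A_n + A_n X = 0` says `X (i+1) 0 = 0`
and `X j i + X (i+1) (j+1) = 0`. These force
`X r c = [r even, r ≤ c] a (c - r) - [c odd, c ≤ r] a (r - c)`, and at the last column they
force `a d = 0` for `d > 0` of parity opposite to `n`. Hence `X ↦ X 0 0` is a character, and
for `X, Y` in its kernel the first row of `X * Y` is the convolution
`∑_{i + j = c, i, j even} a i * b j`, symmetric in `X` and `Y`. As elements of `sol_{A_n}` are
determined by their first row, the kernel is abelian, so the derived series reaches `0` after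
two steps.
-/

theorem LieAlgebra.isSolvable_of_isLieAbelian_ker {R L L' : Type*} [CommRing R] [LieRing L]
    [LieAlgebra R L] [LieRing L'] [LieAlgebra R L'] [IsLieAbelian L'] (f : L →ₗ⁅R⁆ L')
    [IsLieAbelian f.ker] : IsSolvable L := by
  have hder : derivedSeries R L 1 ≤ f.ker := by
    rw [derivedSeries_def, derivedSeriesOfIdeal_succ, derivedSeriesOfIdeal_zero,
      LieSubmodule.lie_le_iff]
    intro x _ y _
    rw [LieHom.mem_ker, LieHom.map_lie, trivial_lie_zero]
  refine (isSolvable_iff R L).mpr ⟨2, le_bot_iff.mp ?_⟩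
  calc derivedSeries R L 2 = derivedSeriesOfIdeal R L 1 (derivedSeries R L 1) :=
        derivedSeriesOfIdeal_add _ 1 1
    _ ≤ derivedSeriesOfIdeal R L 1 f.ker := derivedSeriesOfIdeal_mono hder 1
    _ = ⊥ := (abelian_iff_derived_one_eq_bot _).mp ‹_›

namespace Matrix

variable {R : Type*} {n : ℕ}

-- Indices run over ℕ with out-of-range entries read as `0`, so that the shifts `i ↦ i + 1`
-- coming from `A_n` need no bound bookkeeping.
def natEntry [Zero R] (X : Matrix (Fin n) (Fin n) R) (i j : ℕ) : R :=
  if h : i < n ∧ j < n then X ⟨i, h.1⟩ ⟨j, h.2⟩ else 0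

section Zero

variable [Zero R] (X : Matrix (Fin n) (Fin n) R)

@[simp]
theorem natEntry_fin (i j : Fin n) : X.natEntry i j = X i j := by
  simp [natEntry]

theorem natEntry_of_le_left {i : ℕ} (j : ℕ) (hi : n ≤ i) : X.natEntry i j = 0 :=
  dif_neg (by omega)

theorem natEntry_of_le_right (i : ℕ) {j : ℕ} (hj : n ≤ j) : X.natEntry i j = 0 :=
  dif_neg (by omega)

theorem natEntry_transpose (i j : ℕ) : Xᵀ.natEntry i j = X.natEntry j i := by
  unfold natEntry; split_ifs <;> first | rfl | omega

theorem ext_natEntry {X Y : Matrix (Fin n) (Fin n) R}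
    (h : ∀ i j : ℕ, X.natEntry i j = Y.natEntry i j) : X = Y := by
  ext i j; simpa using h i j

end Zero

theorem natEntry_add [AddZeroClass R] (X Y : Matrix (Fin n) (Fin n) R) (i j : ℕ) :
    (X + Y).natEntry i j = X.natEntry i j + Y.natEntry i j := by
  unfold natEntry; split_ifs <;> simp

theorem natEntry_sub [SubNegZeroMonoid R] (X Y : Matrix (Fin n) (Fin n) R) (i j : ℕ) :
    (X - Y).natEntry i j = X.natEntry i j - Y.natEntry i j := by
  unfold natEntry; split_ifs <;> simp

theorem natEntry_smul {S : Type*} [Zero R] [SMulZeroClass S R] (a : S)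
    (X : Matrix (Fin n) (Fin n) R) (i j : ℕ) :
    (a • X).natEntry i j = a • X.natEntry i j := by
  unfold natEntry; split_ifs <;> simp

theorem natEntry_mul [NonUnitalNonAssocSemiring R] (X Y : Matrix (Fin n) (Fin n) R) (i j : ℕ) :
    (X * Y).natEntry i j = ∑ k ∈ Finset.range n, X.natEntry i k * Y.natEntry k j := by
  by_cases h : i < n ∧ j < n
  · rw [← Fin.sum_univ_eq_sum_range (fun k => X.natEntry i k * Y.natEntry k j)]
    simp [natEntry, h, mul_apply]
  · unfold natEntry
    rw [dif_neg h]
    refine (Finset.sum_eq_zero fun k hk => ?_).symm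
    rw [Finset.mem_range] at hk
    split_ifs <;> first | simp | omega

end Matrix

namespace SolShift

variable {n : ℕ}

theorem natEntry_shiftMat (i j : ℕ) :
    (shiftMat n).natEntry i j = if j = i + 1 ∧ j < n then 1 else 0 := by
  unfold natEntry shiftMat
  by_cases h : i < n ∧ j < n
  · simp only [dif_pos h, of_apply, h.2, and_true]
  · rw [dif_neg h, if_neg (by omega)]

theorem natEntry_shiftMat_mul (X : Matrix (Fin n) (Fin n) ℂ) (i j : ℕ) :
    (shiftMat n * X).natEntry i j = X.natEntry (i + 1) j := by
  rw [natEntry_mul, Finset.sum_eq_single (i + 1)]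
  · simp only [natEntry_shiftMat, true_and, ite_mul, one_mul, zero_mul, ite_eq_left_iff]
    exact fun h => (natEntry_of_le_left X j (not_lt.mp h)).symm
  · intro k _ hk; simp [natEntry_shiftMat, hk]
  · intro h
    rw [natEntry_of_le_left X j (by simpa using h), mul_zero]

theorem natEntry_mul_shiftMat_zero (X : Matrix (Fin n) (Fin n) ℂ) (i : ℕ) :
    (X * shiftMat n).natEntry i 0 = 0 := by
  simp [natEntry_mul, natEntry_shiftMat]

theorem natEntry_mul_shiftMat_succ (X : Matrix (Fin n) (Fin n) ℂ) (i : ℕ) {j : ℕ}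
    (hj : j + 1 < n) : (X * shiftMat n).natEntry i (j + 1) = X.natEntry i j := by
  rw [natEntry_mul, Finset.sum_eq_single j]
  · simp [natEntry_shiftMat, hj]
  · intro k _ hk; simp [natEntry_shiftMat, hk.symm]
  · intro h
    exact absurd (Finset.mem_range.mpr (by omega)) h

variable {X : Matrix (Fin n) (Fin n) ℂ}

theorem natEntry_transpose_mul_add_mul_eq_zero (hX : X ∈ solAlg n (shiftMat n)) (i j : ℕ) :
    (Xᵀ * shiftMat n).natEntry i j + (shiftMat n * X).natEntry i j = 0 := by
  rw [← natEntry_add, show Xᵀ * shiftMat n + shiftMat n * X = 0 from hX]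
  simp [natEntry]

theorem natEntry_succ_zero (hX : X ∈ solAlg n (shiftMat n)) (i : ℕ) :
    X.natEntry (i + 1) 0 = 0 := by
  simpa [natEntry_mul_shiftMat_zero, natEntry_shiftMat_mul]
    using natEntry_transpose_mul_add_mul_eq_zero hX i 0

theorem natEntry_add_natEntry_succ (hX : X ∈ solAlg n (shiftMat n)) (i : ℕ) {j : ℕ}
    (hj : j + 1 < n) : X.natEntry j i + X.natEntry (i + 1) (j + 1) = 0 := by
  simpa [natEntry_mul_shiftMat_succ _ _ hj, natEntry_transpose, natEntry_shiftMat_mul]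
    using natEntry_transpose_mul_add_mul_eq_zero hX i (j + 1)

theorem natEntry_eq_firstRow (hX : X ∈ solAlg n (shiftMat n)) (r c : ℕ) :
    X.natEntry r c =
      (if r % 2 = 0 ∧ r ≤ c ∧ c < n then X.natEntry 0 (c - r) else 0) -
        (if c % 2 = 1 ∧ c ≤ r ∧ r < n then X.natEntry 0 (r - c) else 0) := by
  induction h : r + c using Nat.strong_induction_on generalizing r c with
  | _ m ih =>
  match r, c with
  | 0, c =>
    rw [if_neg (show ¬(c % 2 = 1 ∧ c ≤ 0 ∧ 0 < n) by omega), sub_zero, Nat.sub_zero]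
    split_ifs
    · rfl
    · exact natEntry_of_le_right X 0 (by omega)
  | r + 1, 0 => simp [natEntry_succ_zero hX]
  | r + 1, c + 1 =>
    by_cases hrc : r + 1 < n ∧ c + 1 < n
    · rw [eq_neg_of_add_eq_zero_right (natEntry_add_natEntry_succ hX r hrc.2),
        ih (c + r) (by omega) c r (by omega), Nat.add_sub_add_right, Nat.add_sub_add_right]
      split_ifs <;> first | omega | ring
    · rw [if_neg (by omega), if_neg (by omega), sub_zero]
      rcases not_and_or.mp hrc with hr | hc
      · exact natEntry_of_le_left X _ (not_lt.mp hr)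
      · exact natEntry_of_le_right X _ (not_lt.mp hc)

variable {Y : Matrix (Fin n) (Fin n) ℂ}

theorem eq_zero_of_firstRow_eq_zero (hX : X ∈ solAlg n (shiftMat n))
    (h : ∀ c, X.natEntry 0 c = 0) : X = 0 :=
  ext_natEntry fun r c => by rw [natEntry_eq_firstRow hX r c, h, h]; simp [natEntry]

theorem natEntry_zero_eq_zero_of_mod_two_ne (hX : X ∈ solAlg n (shiftMat n)) {d : ℕ}
    (hd : 0 < d) (hpar : d % 2 ≠ n % 2) : X.natEntry 0 d = 0 := by
  by_cases hdn : d < n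
  · have hlast := natEntry_add_natEntry_succ hX (n - 1) (j := n - 1 - d) (by omega)
    rw [Nat.sub_add_cancel (by omega), natEntry_of_le_left X _ le_rfl, add_zero,
      natEntry_eq_firstRow hX, if_pos (by omega), if_neg (by omega), sub_zero,
      Nat.sub_sub_self (by omega)] at hlast
    exact hlast
  · exact natEntry_of_le_right X 0 (by omega)

theorem natEntry_mul_zero_zero (hY : Y ∈ solAlg n (shiftMat n)) :
    (X * Y).natEntry 0 0 = X.natEntry 0 0 * Y.natEntry 0 0 := by
  rw [natEntry_mul, Finset.sum_eq_single 0]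
  · intro k _ hk
    obtain ⟨k, rfl⟩ := Nat.exists_eq_succ_of_ne_zero hk
    rw [natEntry_succ_zero hY, mul_zero]
  · intro h
    rw [natEntry_of_le_left X 0 (by simpa using h), zero_mul]

theorem natEntry_zero_mul_natEntry_eq_ite (hX : X ∈ solAlg n (shiftMat n))
    (hY : Y ∈ solAlg n (shiftMat n)) (hX0 : X.natEntry 0 0 = 0) (hY0 : Y.natEntry 0 0 = 0)
    (k : ℕ) {c : ℕ} (hc : c < n) :
    X.natEntry 0 k * Y.natEntry k c =
      if k ≤ c ∧ k % 2 = 0 ∧ (c - k) % 2 = 0 then X.natEntry 0 k * Y.natEntry 0 (c - k)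
      else 0 := by
  have hYs : ∀ d, ¬(0 < d ∧ d % 2 = n % 2) → Y.natEntry 0 d = 0 := fun d hd => by
    rcases Nat.eq_zero_or_pos d with rfl | hd0
    · exact hY0
    · exact natEntry_zero_eq_zero_of_mod_two_ne hY hd0 fun h => hd ⟨hd0, h⟩
  by_cases hk : 0 < k ∧ k % 2 = n % 2
  · rw [natEntry_eq_firstRow hY k c]
    split_ifs <;> first
      | omega
      | (rw [hYs (c - k) (by omega)]; ring)
      | (rw [hYs (k - c) (by omega)]; ring)
      | ring
  · have hXk : X.natEntry 0 k = 0 := by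
      rcases Nat.eq_zero_or_pos k with rfl | hk0
      · exact hX0
      · exact natEntry_zero_eq_zero_of_mod_two_ne hX hk0 fun h => hk ⟨hk0, h⟩
    simp [hXk]

open Finset in
theorem natEntry_zero_mul_eq_sum_antidiagonal (hX : X ∈ solAlg n (shiftMat n))
    (hY : Y ∈ solAlg n (shiftMat n)) (hX0 : X.natEntry 0 0 = 0) (hY0 : Y.natEntry 0 0 = 0)
    {c : ℕ} (hc : c < n) :
    (X * Y).natEntry 0 c = ∑ p ∈ antidiagonal c,
      if p.1 % 2 = 0 ∧ p.2 % 2 = 0 then X.natEntry 0 p.1 * Y.natEntry 0 p.2 else 0 := by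
  rw [Nat.sum_antidiagonal_eq_sum_range_succ
      (fun i j => if i % 2 = 0 ∧ j % 2 = 0 then X.natEntry 0 i * Y.natEntry 0 j else 0),
    natEntry_mul, ← sum_subset (range_subset_range.mpr hc)]
  · refine sum_congr rfl fun k hk => ?_
    rw [natEntry_zero_mul_natEntry_eq_ite hX hY hX0 hY0 k hc]
    simp [Nat.lt_succ_iff.mp (mem_range.mp hk)]
  · intro k _ hk
    rw [natEntry_zero_mul_natEntry_eq_ite hX hY hX0 hY0 k hc, if_neg]
    simp only [mem_range] at hk
    omega

theorem commute_of_natEntry_zero_zero_eq_zero (hX : X ∈ solAlg n (shiftMat n))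
    (hY : Y ∈ solAlg n (shiftMat n)) (hX0 : X.natEntry 0 0 = 0) (hY0 : Y.natEntry 0 0 = 0) :
    Commute X Y := by
  have hXY : X * Y - Y * X ∈ solAlg n (shiftMat n) := by
    simpa only [Ring.lie_def] using (solAlg n (shiftMat n)).lie_mem hX hY
  refine sub_eq_zero.mp (eq_zero_of_firstRow_eq_zero hXY fun c => ?_)
  rcases lt_or_ge c n with hc | hc
  · rw [natEntry_sub, natEntry_zero_mul_eq_sum_antidiagonal hX hY hX0 hY0 hc,
      natEntry_zero_mul_eq_sum_antidiagonal hY hX hY0 hX0 hc, ← Finset.Nat.sum_antidiagonal_swap,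
      sub_eq_zero]
    refine Finset.sum_congr rfl fun p _ => ?_
    simp only [Prod.fst_swap, Prod.snd_swap, and_comm, mul_comm]
  · exact natEntry_of_le_right _ 0 hc

def cornerChar (n : ℕ) : solAlg n (shiftMat n) →ₗ⁅ℂ⁆ ℂ where
  toFun X := (X : Matrix (Fin n) (Fin n) ℂ).natEntry 0 0
  map_add' X Y := natEntry_add _ _ 0 0
  map_smul' a X := natEntry_smul a _ 0 0
  map_lie' {X Y} := by
    change (X.1 * Y.1 - Y.1 * X.1).natEntry 0 0 = _
    rw [natEntry_sub, natEntry_mul_zero_zero Y.2, natEntry_mul_zero_zero X.2, Ring.lie_def]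

instance : IsLieAbelian (cornerChar n).ker where
  trivial X Y := by
    have hXY := commute_of_natEntry_zero_zero_eq_zero X.1.2 Y.1.2
      (LieHom.mem_ker.mp X.2) (LieHom.mem_ker.mp Y.2)
    exact Subtype.ext <| Subtype.ext <| sub_eq_zero.mpr hXY.eq

end SolShift

theorem stmt_14 (n : ℕ) :
    LieAlgebra.IsSolvable ↥(solAlg n (shiftMat n)) := by
  have : IsLieAbelian ℂ := isMulCommutative_iff_isLieAbelian.mp inferInstance
  exact LieAlgebra.isSolvable_of_isLieAbelian_ker (SolShift.cornerChar n)
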